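/- arXiv:1707.03618 — 4 statements merged into one kernel-verified Lean document; each statement's English description precedes it below -/
import Mathlib

section
/- If the concircular curvature tensor C̃ is Ricci pseudosymmetric with function L_S, i.e. S(C̃(X,Y)Z,U) + S(Z,C̃(X,Y)U) = L_S (g(Y,Z)S(X,U) - g(X,Z)S(Y,U) + g(Y,U)S(X,Z) - g(X,U)S(Y,Z)) holds for all X, Y, Z, U ∈ V, then L_S = (α² - ρ) + λ/(n-1) + α/n. -/
/-!
Evaluate the pseudosymmetry identity at `X = Z = ξ`, with `Y` a nonzero vector orthogonal to `ξ`.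
Because `R(X,Y)ξ` has the constant-curvature shape, so does `C̃(X,Y)ξ`, with `α² - ρ` replaced by
`α² - ρ - r/(n(n-1))`; the identity then collapses to `α (α² - ρ - r/(n(n-1)) - L_S) g(Y,U) = 0`.
Choosing `U` with `g(Y,U) ≠ 0` (nondegeneracy) gives `L_S = α² - ρ - r/(n(n-1))`, which is the
claimed value once `r` is substituted.
-/

lemma LinearMap.exists_ne_zero_apply_eq_zero {K V : Type*} [Field K] [AddCommGroup V] [Module K V]
    [FiniteDimensional K V] (hV : 2 ≤ Module.finrank K V) (f : V →ₗ[K] K) :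
    ∃ Y ≠ 0, f Y = 0 := by
  have hker : LinearMap.ker f ≠ ⊥ :=
    LinearMap.ker_ne_bot_of_finrank_lt (by rw [Module.finrank_self]; omega)
  obtain ⟨Y, hY, hY0⟩ := (Submodule.ne_bot_iff _).mp hker
  exact ⟨Y, hY0, hY⟩

section CurvatureAlongXi

variable {V : Type*} [AddCommGroup V] [Module ℝ V] (g : LinearMap.BilinForm ℝ V) (ξ : V) (a : ℝ)
  (R : V →ₗ[ℝ] V →ₗ[ℝ] V →ₗ[ℝ] V)

lemma bilin_curvature_apply_xi
    (hRxi : ∀ X Y : V, R X Y ξ = a • (g Y ξ • X - g X ξ • Y))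
    (hRskew : ∀ X Y Z U : V, g (R X Y Z) U = - g (R X Y U) Z) (X Y U : V) :
    g (R X Y U) ξ = a * (g X ξ * g Y U - g Y ξ * g X U) := by
  rw [hRskew, hRxi]
  simp only [map_smul, map_sub, LinearMap.smul_apply, LinearMap.sub_apply, smul_eq_mul]
  ring

variable (k : ℝ) (Ct : V → V → V → V)

lemma concircular_apply_xi
    (hRxi : ∀ X Y : V, R X Y ξ = a • (g Y ξ • X - g X ξ • Y))
    (hCt : ∀ X Y Z : V, Ct X Y Z = R X Y Z - k • (g Y Z • X - g X Z • Y)) (X Y : V) :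
    Ct X Y ξ = (a - k) • (g Y ξ • X - g X ξ • Y) := by
  rw [hCt, hRxi, sub_smul]

lemma bilin_concircular_apply_xi
    (hRxi : ∀ X Y : V, R X Y ξ = a • (g Y ξ • X - g X ξ • Y))
    (hRskew : ∀ X Y Z U : V, g (R X Y Z) U = - g (R X Y U) Z)
    (hCt : ∀ X Y Z : V, Ct X Y Z = R X Y Z - k • (g Y Z • X - g X Z • Y)) (X Y U : V) :
    g (Ct X Y U) ξ = (a - k) * (g X ξ * g Y U - g Y ξ * g X U) := by
  rw [hCt, map_sub, LinearMap.sub_apply, bilin_curvature_apply_xi g ξ a R hRxi hRskew]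
  simp only [map_smul, map_sub, LinearMap.smul_apply, LinearMap.sub_apply, smul_eq_mul]
  ring

end CurvatureAlongXi

theorem stmt0
    {V : Type*} [AddCommGroup V] [Module ℝ V] [FiniteDimensional ℝ V]
    (n : ℕ) (hn : 3 ≤ n) (hdim : Module.finrank ℝ V = n)
    (g : LinearMap.BilinForm ℝ V)
    (hg_symm : ∀ X Y : V, g X Y = g Y X)
    (hg_nondeg : g.Nondegenerate)
    (ξ : V) (hξ : g ξ ξ = -1)
    (η : V → ℝ) (hη : ∀ X : V, η X = g X ξ)
    (α ρ lam L : ℝ) (hα : α ≠ 0)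
    (R : V →ₗ[ℝ] V →ₗ[ℝ] V →ₗ[ℝ] V)
    (hRxi : ∀ X Y : V, R X Y ξ = (α ^ 2 - ρ) • (η Y • X - η X • Y))
    (hRskew : ∀ X Y Z U : V, g (R X Y Z) U = - g (R X Y U) Z)
    (S : V → V → ℝ)
    (hS : ∀ X Y : V, S X Y = -(α + lam) * g X Y - α * η X * η Y)
    (r : ℝ) (hr : r = -lam * (n : ℝ) - ((n : ℝ) - 1) * α)
    (Ct : V → V → V → V)
    (hCt : ∀ X Y Z : V, Ct X Y Z = R X Y Z
      - (r / ((n : ℝ) * ((n : ℝ) - 1))) • (g Y Z • X - g X Z • Y))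
    (hPS : ∀ X Y Z U : V, S (Ct X Y Z) U + S Z (Ct X Y U) =
      L * (g Y Z * S X U - g X Z * S Y U + g Y U * S X Z - g X U * S Y Z))
    : L = (α ^ 2 - ρ) + lam / ((n : ℝ) - 1) + α / (n : ℝ) := by
  simp only [hη] at hRxi hS
  set c := α ^ 2 - ρ - r / ((n : ℝ) * ((n : ℝ) - 1)) with hc
  obtain ⟨Y, hY0, hYξ⟩ : ∃ Y ≠ 0, g Y ξ = 0 :=
    LinearMap.exists_ne_zero_apply_eq_zero (by omega) (LinearMap.flip g ξ)
  obtain ⟨U, hU⟩ : ∃ U, g Y U ≠ 0 := by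
    by_contra! h
    exact hY0 (hg_nondeg.1 Y h)
  have hCtξ := concircular_apply_xi g ξ _ R _ Ct hRxi hCt ξ Y
  have hgCt := bilin_concircular_apply_xi g ξ _ R _ Ct hRxi hRskew hCt ξ Y U
  rw [hYξ, hξ] at hCtξ hgCt
  have hPSξ := hPS ξ Y ξ U
  simp only [hS, hCtξ, hg_symm ξ, hgCt, hYξ, hξ, map_smul, map_sub, LinearMap.smul_apply,
    LinearMap.sub_apply, smul_eq_mul] at hPSξ
  have hL : L = c := by
    have : (c - L) * (α * g Y U) = 0 := by linear_combination -hPSξ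
    rcases mul_eq_zero.mp this with h | h
    · linarith
    · exact absurd h (mul_ne_zero hα hU)
  have hn0 : (n : ℝ) ≠ 0 := by positivity
  have hn1 : (n : ℝ) - 1 ≠ 0 := by
    have : (3 : ℝ) ≤ n := by exact_mod_cast hn
    linarith
  rw [hL, hc, hr]
  field_simp
  ring
end

section
/- If the concircular curvature tensor C̃ is Ricci pseudosymmetric with function L_S, i.e. S(C̃(X,Y)Z,U) + S(Z,C̃(X,Y)U) = L_S (g(Y,Z)S(X,U) - g(X,Z)S(Y,U) + g(Y,U)S(X,Z) - g(X,U)S(Y,Z)) holds for all X, Y, Z, U ∈ V, then λ < 0 if and only if L_S < α/n + (α² - ρ), λ = 0 if and only if L_S = α/n + (α² - ρ), and λ > 0 if and only if L_S > α/n + (α² - ρ); that is, α/n + (α² - ρ) is the critical value for L_S. -/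
/-!
Evaluating the pseudosymmetry condition at `(X, ξ, Z, ξ)` and using `R(X, ξ)ξ = (α² - ρ)(-X - η(X)ξ)`,
both sides become multiples of `α (g(X, Z) + η(X)η(Z))`, with coefficients `α² - ρ - r/(n(n-1))` and `L_S`.
Nondegeneracy of `g` and `n ≥ 2` give `X, Z` for which this factor is nonzero, so
`L_S = α² - ρ - r/(n(n-1))`, i.e. `λ = (n - 1)(L_S - α/n - (α² - ρ))`.
-/

open Module

section

variable {V : Type*} [AddCommGroup V] [Module ℝ V]

def solitonRicci (g : LinearMap.BilinForm ℝ V) (ξ : V) (α lam : ℝ) (X Y : V) : ℝ :=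
  -(α + lam) * g X Y - α * g X ξ * g Y ξ

/-- `c` plays the role of `r / (n (n - 1))`. -/
def concircularTensor (R : V →ₗ[ℝ] V →ₗ[ℝ] V →ₗ[ℝ] V) (g : LinearMap.BilinForm ℝ V) (c : ℝ)
    (X Y Z : V) : V :=
  R X Y Z - c • (g Y Z • X - g X Z • Y)

theorem LinearMap.BilinForm.exists_apply_add_mul_apply_ne_zero {g : LinearMap.BilinForm ℝ V}
    (hg : g.Nondegenerate) (ξ : V) (hV : 1 < finrank ℝ V) :
    ∃ X Z, g X Z + g X ξ * g ξ Z ≠ 0 := by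
  by_contra! h
  have hmul : ∀ X : V, ∃ c : ℝ, c • ξ = X := fun X => by
    have hX : X + g X ξ • ξ = 0 := hg.1 _ fun Z => by simpa using h X Z
    exact ⟨-g X ξ, by linear_combination (norm := module) -hX⟩
  exact absurd (finrank_le_one ξ hmul) hV.not_ge

theorem eq_sub_of_concircular_ricciPseudosymmetric {g : LinearMap.BilinForm ℝ V}
    (hg_symm : ∀ X Y : V, g X Y = g Y X) (hg_nondeg : g.Nondegenerate) (hV : 1 < finrank ℝ V)
    {ξ : V} (hξ : g ξ ξ = -1) {α κ c lam L : ℝ} (hα : α ≠ 0) {R : V →ₗ[ℝ] V →ₗ[ℝ] V →ₗ[ℝ] V}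
    (hRxi : ∀ X Y : V, R X Y ξ = κ • (g Y ξ • X - g X ξ • Y))
    (hRskew : ∀ X Y Z U : V, g (R X Y Z) U = - g (R X Y U) Z)
    (hPS : ∀ X Y Z U : V,
      solitonRicci g ξ α lam (concircularTensor R g c X Y Z) U +
        solitonRicci g ξ α lam Z (concircularTensor R g c X Y U) =
      L * (g Y Z * solitonRicci g ξ α lam X U - g X Z * solitonRicci g ξ α lam Y U +
        g Y U * solitonRicci g ξ α lam X Z - g X U * solitonRicci g ξ α lam Y Z)) :
    L = κ - c := by
  obtain ⟨X, Z, hXZ⟩ := LinearMap.BilinForm.exists_apply_add_mul_apply_ne_zero hg_nondeg ξ hV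
  have key : (L - (κ - c)) * (α * (g X Z + g X ξ * g ξ Z)) = 0 := by
    have h := hPS X ξ Z ξ
    simp only [solitonRicci, concircularTensor, map_sub, map_smul, LinearMap.sub_apply,
      LinearMap.smul_apply, smul_eq_mul] at h
    rw [hRskew X ξ Z ξ, hRxi X ξ] at h
    simp only [map_sub, map_smul, LinearMap.sub_apply, LinearMap.smul_apply, smul_eq_mul, hξ,
      hg_symm Z X, hg_symm Z ξ] at h
    linear_combination -h
  have hfactor : α * (g X Z + g X ξ * g ξ Z) ≠ 0 := mul_ne_zero hα hXZ
  linarith [(mul_eq_zero.mp key).resolve_right hfactor]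

end

theorem neg_zero_pos_iff_of_eq_mul_sub {x y m c : ℝ} (hc : 0 < c) (h : x = c * (y - m)) :
    (x < 0 ↔ y < m) ∧ (x = 0 ↔ y = m) ∧ (0 < x ↔ m < y) := by
  subst h
  refine ⟨?_, ?_, ?_⟩
  · simp [mul_neg_iff, hc, hc.not_gt]
  · rw [mul_eq_zero, sub_eq_zero]
    simp [hc.ne']
  · rw [mul_pos_iff_of_pos_left hc, sub_pos]

theorem stmt1_general
    {V : Type*} [AddCommGroup V] [Module ℝ V]
    (n : ℕ) (hn : 3 ≤ n) (hdim : Module.finrank ℝ V = n)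
    (g : LinearMap.BilinForm ℝ V)
    (hg_symm : ∀ X Y : V, g X Y = g Y X)
    (hg_nondeg : g.Nondegenerate)
    (ξ : V) (hξ : g ξ ξ = -1)
    (η : V → ℝ) (hη : ∀ X : V, η X = g X ξ)
    (α ρ lam L : ℝ) (hα : α ≠ 0)
    (R : V →ₗ[ℝ] V →ₗ[ℝ] V →ₗ[ℝ] V)
    (hRxi : ∀ X Y : V, R X Y ξ = (α ^ 2 - ρ) • (η Y • X - η X • Y))
    (hRskew : ∀ X Y Z U : V, g (R X Y Z) U = - g (R X Y U) Z)
    (S : V → V → ℝ)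
    (hS : ∀ X Y : V, S X Y = -(α + lam) * g X Y - α * η X * η Y)
    (r : ℝ) (hr : r = -lam * (n : ℝ) - ((n : ℝ) - 1) * α)
    (Ct : V → V → V → V)
    (hCt : ∀ X Y Z : V, Ct X Y Z = R X Y Z
      - (r / ((n : ℝ) * ((n : ℝ) - 1))) • (g Y Z • X - g X Z • Y))
    (hPS : ∀ X Y Z U : V, S (Ct X Y Z) U + S Z (Ct X Y U) =
      L * (g Y Z * S X U - g X Z * S Y U + g Y U * S X Z - g X U * S Y Z))
    : (lam < 0 ↔ L < α / (n : ℝ) + (α ^ 2 - ρ)) ∧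
      (lam = 0 ↔ L = α / (n : ℝ) + (α ^ 2 - ρ)) ∧
      (0 < lam ↔ α / (n : ℝ) + (α ^ 2 - ρ) < L) := by
  obtain rfl : η = (g · ξ) := funext hη
  obtain rfl : S = solitonRicci g ξ α lam := funext₂ hS
  obtain rfl : Ct = concircularTensor R g (r / (n * (n - 1))) := funext₃ hCt
  have hn1 : (1 : ℝ) < n := by exact_mod_cast (by omega : 1 < n)
  have hL := eq_sub_of_concircular_ricciPseudosymmetric hg_symm hg_nondeg (by omega) hξ hα hRxi hRskew hPS
  refine neg_zero_pos_iff_of_eq_mul_sub (c := n - 1) (by linarith) ?_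
  have hn0 : (n : ℝ) ≠ 0 := by positivity
  have hn1' : (n : ℝ) - 1 ≠ 0 := by linarith
  rw [hL, hr]
  field_simp
  ring

theorem stmt1
    {V : Type*} [AddCommGroup V] [Module ℝ V] [FiniteDimensional ℝ V]
    (n : ℕ) (hn : 3 ≤ n) (hdim : Module.finrank ℝ V = n)
    (g : LinearMap.BilinForm ℝ V)
    (hg_symm : ∀ X Y : V, g X Y = g Y X)
    (hg_nondeg : g.Nondegenerate)
    (ξ : V) (hξ : g ξ ξ = -1)
    (η : V → ℝ) (hη : ∀ X : V, η X = g X ξ)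
    (α ρ lam L : ℝ) (hα : α ≠ 0)
    (R : V →ₗ[ℝ] V →ₗ[ℝ] V →ₗ[ℝ] V)
    (hRxi : ∀ X Y : V, R X Y ξ = (α ^ 2 - ρ) • (η Y • X - η X • Y))
    (hRskew : ∀ X Y Z U : V, g (R X Y Z) U = - g (R X Y U) Z)
    (S : V → V → ℝ)
    (hS : ∀ X Y : V, S X Y = -(α + lam) * g X Y - α * η X * η Y)
    (r : ℝ) (hr : r = -lam * (n : ℝ) - ((n : ℝ) - 1) * α)
    (Ct : V → V → V → V)
    (hCt : ∀ X Y Z : V, Ct X Y Z = R X Y Z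
      - (r / ((n : ℝ) * ((n : ℝ) - 1))) • (g Y Z • X - g X Z • Y))
    (hPS : ∀ X Y Z U : V, S (Ct X Y Z) U + S Z (Ct X Y U) =
      L * (g Y Z * S X U - g X Z * S Y U + g Y U * S X Z - g X U * S Y Z))
    : (lam < 0 ↔ L < α / (n : ℝ) + (α ^ 2 - ρ)) ∧
      (lam = 0 ↔ L = α / (n : ℝ) + (α ^ 2 - ρ)) ∧
      (0 < lam ↔ α / (n : ℝ) + (α ^ 2 - ρ) < L) :=
  stmt1_general n hn hdim g hg_symm hg_nondeg ξ hξ η hη α ρ lam L hα R hRxi hRskew S hS r hr Ct hCt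
    hPS
end

section
/- For all X, Y, Z, U ∈ V one has S(C̃(X,Y)Z,U) + S(Z,C̃(X,Y)U) = (14/(3z²))·(g(Y,Z)S(X,U) - g(X,Z)S(Y,U) + g(Y,U)S(X,Z) - g(X,U)S(Y,Z)); that is, the example (LCS)₃-structure is concircular Ricci pseudosymmetric with L_S = 14/(3z²). -/
/-! Write `X ∧ Y` for the endomorphism `Z ↦ g(Y,Z) X - g(X,Z) Y` and `A·S` for the bilinear form
`(Z,U) ↦ S(AZ,U) + S(Z,AU)`. For symmetric `S`, `(X ∧ Y)·S` is the bracket on the right-hand side,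
and `C̃(X,Y) = R(X,Y) - (r/6) X ∧ Y`. The curvature of the example is
`R(X,Y) = (6/z²) X ∧ Y - (2/z²)(X₁Y₂ - X₂Y₁) J`, with `J` the quarter turn of the `(e₁,e₂)`-plane
(indices `0` and `1` of `Fin 3`), and `J·S = 0` because `S` is a multiple of `g` on that plane.
Hence `C̃(X,Y)·S = (6/z² - r/6) (X ∧ Y)·S = (14/(3z²)) (X ∧ Y)·S`. -/
open LinearMap (BilinForm)

section DerivAction

variable {K M : Type*} [CommRing K] [AddCommGroup M] [Module K M]

def wedgeEnd (g : BilinForm K M) (X Y Z : M) : M := g Y Z • X - g X Z • Y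

def derivAction (S : BilinForm K M) (A : M → M) (Z U : M) : K := S (A Z) U + S Z (A U)

theorem derivAction_sub (S : BilinForm K M) (A B : M → M) (Z U : M) :
    derivAction S (A - B) Z U = derivAction S A Z U - derivAction S B Z U := by
  simp only [derivAction, Pi.sub_apply, map_sub, LinearMap.sub_apply]
  ring

theorem derivAction_smul (S : BilinForm K M) (c : K) (A : M → M) (Z U : M) :
    derivAction S (c • A) Z U = c * derivAction S A Z U := by
  simp only [derivAction, Pi.smul_apply, map_smul, LinearMap.smul_apply, smul_eq_mul]
  ring

theorem derivAction_wedgeEnd {S : BilinForm K M} (hS : ∀ X Y, S X Y = S Y X) (g : BilinForm K M)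
    (X Y Z U : M) : derivAction S (wedgeEnd g X Y) Z U =
      g Y Z * S X U - g X Z * S Y U + g Y U * S X Z - g X U * S Y Z := by
  simp only [derivAction, wedgeEnd, map_sub, map_smul, LinearMap.sub_apply,
    LinearMap.smul_apply, smul_eq_mul, hS Z X, hS Z Y]
  ring

end DerivAction

theorem LinearMap.BilinForm.apply_eq_sum_of_diagonal {ι K : Type*} [Fintype ι] [DecidableEq ι]
    [CommRing K] {B : BilinForm K (ι → K)}
    (hB : ∀ i j, i ≠ j → B (Pi.single i 1) (Pi.single j 1) = 0) (X Y : ι → K) :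
    B X Y = ∑ i, B (Pi.single i 1) (Pi.single i 1) * X i * Y i := by
  conv_lhs => rw [← Matrix.toBilin'_toMatrix' B, Matrix.toBilin'_apply]
  refine Finset.sum_congr rfl fun i _ => ?_
  rw [Finset.sum_eq_single i (fun j _ hji => by simp [hB i j (Ne.symm hji)]) (by simp),
    LinearMap.BilinForm.toMatrix'_apply]
  ring

def rotate01 {K : Type*} [Neg K] [Zero K] (Z : Fin 3 → K) : Fin 3 → K := ![Z 1, -Z 0, 0]

theorem derivAction_rotate01 {K : Type*} [CommRing K] {S : BilinForm K (Fin 3 → K)}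
    (hS : ∀ i j, i ≠ j → S (Pi.single i 1) (Pi.single j 1) = 0)
    (hS01 : S (Pi.single 0 1) (Pi.single 0 1) = S (Pi.single 1 1) (Pi.single 1 1))
    (Z U : Fin 3 → K) : derivAction S rotate01 Z U = 0 := by
  rw [derivAction, S.apply_eq_sum_of_diagonal hS, S.apply_eq_sum_of_diagonal hS]
  simp [Fin.sum_univ_three, rotate01, hS01]

theorem curvature_eq_wedgeEnd_sub_rotate01 {z : ℝ} {g : BilinForm ℝ (Fin 3 → ℝ)}
    (hg1 : g (Pi.single 0 1) (Pi.single 0 1) = 1) (hg2 : g (Pi.single 1 1) (Pi.single 1 1) = 1)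
    (hg3 : g (Pi.single 2 1) (Pi.single 2 1) = -1)
    (hg0 : ∀ i j, i ≠ j → g (Pi.single i 1) (Pi.single j 1) = 0)
    {R : (Fin 3 → ℝ) →ₗ[ℝ] (Fin 3 → ℝ) →ₗ[ℝ] (Fin 3 → ℝ) →ₗ[ℝ] (Fin 3 → ℝ)}
    (hR_anti : ∀ X Y Z, R X Y Z = - R Y X Z)
    (hR121 : R (Pi.single 0 1) (Pi.single 1 1) (Pi.single 0 1) = (-(4 / z ^ 2)) • Pi.single 1 1)
    (hR122 : R (Pi.single 0 1) (Pi.single 1 1) (Pi.single 1 1) = (4 / z ^ 2) • Pi.single 0 1)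
    (hR123 : R (Pi.single 0 1) (Pi.single 1 1) (Pi.single 2 1) = 0)
    (hR131 : R (Pi.single 0 1) (Pi.single 2 1) (Pi.single 0 1) = (-(6 / z ^ 2)) • Pi.single 2 1)
    (hR132 : R (Pi.single 0 1) (Pi.single 2 1) (Pi.single 1 1) = 0)
    (hR133 : R (Pi.single 0 1) (Pi.single 2 1) (Pi.single 2 1) = (-(6 / z ^ 2)) • Pi.single 0 1)
    (hR231 : R (Pi.single 1 1) (Pi.single 2 1) (Pi.single 0 1) = 0)
    (hR232 : R (Pi.single 1 1) (Pi.single 2 1) (Pi.single 1 1) = (-(6 / z ^ 2)) • Pi.single 2 1)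
    (hR233 : R (Pi.single 1 1) (Pi.single 2 1) (Pi.single 2 1) = (-(6 / z ^ 2)) • Pi.single 1 1)
    (X Y : Fin 3 → ℝ) :
    ⇑(R X Y) =
      (6 / z ^ 2) • wedgeEnd g X Y - (2 / z ^ 2 * (X 0 * Y 1 - X 1 * Y 0)) • rotate01 := by
  have hR_self : ∀ X, R X X = 0 := fun X =>
    LinearMap.ext fun Z => self_eq_neg.mp (hR_anti X X Z)
  funext W l
  conv_lhs => rw [pi_eq_sum_univ' X, pi_eq_sum_univ' Y, pi_eq_sum_univ' W]
  simp only [Fin.sum_univ_three, map_add, map_smul, LinearMap.add_apply, LinearMap.smul_apply,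
    hR_self, hR_anti (Pi.single 1 1) (Pi.single 0 1), hR_anti (Pi.single 2 1) (Pi.single 0 1),
    hR_anti (Pi.single 2 1) (Pi.single 1 1), hR121, hR122, hR123, hR131, hR132, hR133, hR231,
    hR232, hR233]
  simp only [Pi.sub_apply, Pi.smul_apply, wedgeEnd]
  rw [g.apply_eq_sum_of_diagonal hg0 Y W, g.apply_eq_sum_of_diagonal hg0 X W]
  simp only [Fin.sum_univ_three, hg1, hg2, hg3]
  fin_cases l <;> simp [rotate01] <;> ring

theorem stmt16_general
    (z : ℝ)
    (e : Fin 3 → (Fin 3 → ℝ)) (he : ∀ i, e i = Pi.single i 1)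
    (g : LinearMap.BilinForm ℝ (Fin 3 → ℝ))
    (hg1 : g (e 0) (e 0) = 1) (hg2 : g (e 1) (e 1) = 1) (hg3 : g (e 2) (e 2) = -1)
    (hg0 : ∀ i j, i ≠ j → g (e i) (e j) = 0)
    (S : LinearMap.BilinForm ℝ (Fin 3 → ℝ))
    (hS_symm : ∀ X Y, S X Y = S Y X)
    (hS1 : S (e 0) (e 0) = -(2 / z ^ 2)) (hS2 : S (e 1) (e 1) = -(2 / z ^ 2))
    (hS0 : ∀ i j, i ≠ j → S (e i) (e j) = 0)
    (R : (Fin 3 → ℝ) →ₗ[ℝ] (Fin 3 → ℝ) →ₗ[ℝ] (Fin 3 → ℝ) →ₗ[ℝ] (Fin 3 → ℝ))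
    (hR_anti : ∀ X Y Z, R X Y Z = - R Y X Z)
    (hR121 : R (e 0) (e 1) (e 0) = (-(4 / z ^ 2)) • e 1)
    (hR122 : R (e 0) (e 1) (e 1) = (4 / z ^ 2) • e 0)
    (hR123 : R (e 0) (e 1) (e 2) = 0)
    (hR131 : R (e 0) (e 2) (e 0) = (-(6 / z ^ 2)) • e 2)
    (hR132 : R (e 0) (e 2) (e 1) = 0)
    (hR133 : R (e 0) (e 2) (e 2) = (-(6 / z ^ 2)) • e 0)
    (hR231 : R (e 1) (e 2) (e 0) = 0)
    (hR232 : R (e 1) (e 2) (e 1) = (-(6 / z ^ 2)) • e 2)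
    (hR233 : R (e 1) (e 2) (e 2) = (-(6 / z ^ 2)) • e 1)
    (r : ℝ) (hr : r = 8 / z ^ 2)
    (Ct : (Fin 3 → ℝ) → (Fin 3 → ℝ) → (Fin 3 → ℝ) → (Fin 3 → ℝ))
    (hCt : ∀ X Y Z, Ct X Y Z = R X Y Z - (r / 6) • (g Y Z • X - g X Z • Y))
    : ∀ X Y Z U : Fin 3 → ℝ,
      S (Ct X Y Z) U + S Z (Ct X Y U) =
        (14 / (3 * z ^ 2)) *
          (g Y Z * S X U - g X Z * S Y U + g Y U * S X Z - g X U * S Y Z) := by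
  obtain rfl : e = fun i => Pi.single i 1 := funext he
  intro X Y Z U
  have hRS : derivAction S (R X Y) Z U = 6 / z ^ 2 * derivAction S (wedgeEnd g X Y) Z U := by
    rw [curvature_eq_wedgeEnd_sub_rotate01 hg1 hg2 hg3 hg0 hR_anti hR121 hR122 hR123 hR131 hR132
      hR133 hR231 hR232 hR233, derivAction_sub, derivAction_smul, derivAction_smul,
      derivAction_rotate01 hS0 (hS1.trans hS2.symm), mul_zero, sub_zero]
  have hCS : derivAction S (Ct X Y) Z U =
      derivAction S (R X Y) Z U - r / 6 * derivAction S (wedgeEnd g X Y) Z U := by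
    rw [show Ct X Y = ⇑(R X Y) - (r / 6) • wedgeEnd g X Y from funext (hCt X Y),
      derivAction_sub, derivAction_smul]
  change derivAction S (Ct X Y) Z U = _
  rw [hCS, hRS, hr, derivAction_wedgeEnd hS_symm]
  ring

theorem stmt16
    (z : ℝ) (hz : z ≠ 0)
    (e : Fin 3 → (Fin 3 → ℝ)) (he : ∀ i, e i = Pi.single i 1)
    (g : LinearMap.BilinForm ℝ (Fin 3 → ℝ))
    (hg_symm : ∀ X Y, g X Y = g Y X)
    (hg1 : g (e 0) (e 0) = 1) (hg2 : g (e 1) (e 1) = 1) (hg3 : g (e 2) (e 2) = -1)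
    (hg0 : ∀ i j, i ≠ j → g (e i) (e j) = 0)
    (S : LinearMap.BilinForm ℝ (Fin 3 → ℝ))
    (hS_symm : ∀ X Y, S X Y = S Y X)
    (hS1 : S (e 0) (e 0) = -(2 / z ^ 2)) (hS2 : S (e 1) (e 1) = -(2 / z ^ 2))
    (hS3 : S (e 2) (e 2) = -(12 / z ^ 2))
    (hS0 : ∀ i j, i ≠ j → S (e i) (e j) = 0)
    (R : (Fin 3 → ℝ) →ₗ[ℝ] (Fin 3 → ℝ) →ₗ[ℝ] (Fin 3 → ℝ) →ₗ[ℝ] (Fin 3 → ℝ))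
    (hR_anti : ∀ X Y Z, R X Y Z = - R Y X Z)
    (hR121 : R (e 0) (e 1) (e 0) = (-(4 / z ^ 2)) • e 1)
    (hR122 : R (e 0) (e 1) (e 1) = (4 / z ^ 2) • e 0)
    (hR123 : R (e 0) (e 1) (e 2) = 0)
    (hR131 : R (e 0) (e 2) (e 0) = (-(6 / z ^ 2)) • e 2)
    (hR132 : R (e 0) (e 2) (e 1) = 0)
    (hR133 : R (e 0) (e 2) (e 2) = (-(6 / z ^ 2)) • e 0)
    (hR231 : R (e 1) (e 2) (e 0) = 0)
    (hR232 : R (e 1) (e 2) (e 1) = (-(6 / z ^ 2)) • e 2)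
    (hR233 : R (e 1) (e 2) (e 2) = (-(6 / z ^ 2)) • e 1)
    (r : ℝ) (hr : r = 8 / z ^ 2)
    (Ct : (Fin 3 → ℝ) → (Fin 3 → ℝ) → (Fin 3 → ℝ) → (Fin 3 → ℝ))
    (hCt : ∀ X Y Z, Ct X Y Z = R X Y Z - (r / 6) • (g Y Z • X - g X Z • Y))
    : ∀ X Y Z U : Fin 3 → ℝ,
      S (Ct X Y Z) U + S Z (Ct X Y U) =
        (14 / (3 * z ^ 2)) *
          (g Y Z * S X U - g X Z * S Y U + g Y U * S X Z - g X U * S Y Z) :=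
  stmt16_general z e he g hg1 hg2 hg3 hg0 S hS_symm hS1 hS2 hS0 R hR_anti hR121 hR122 hR123 hR131
    hR132 hR133 hR231 hR232 hR233 r hr Ct hCt
end

section
/- For X = a₁e₁ + b₁e₂ + c₁e₃, Y = a₂e₁ + b₂e₂ + c₂e₃, Z = a₃e₁ + b₃e₂ + c₃e₃, U = a₄e₁ + b₄e₂ + c₄e₃ with arbitrary real coefficients aᵢ, bᵢ, cᵢ, one has g(Y,Z)S(X,U) - g(X,Z)S(Y,U) + g(Y,U)S(X,Z) - g(X,U)S(Y,Z) = (14/z²)·((a₁c₂ - a₂c₁)(a₃c₄ + a₄c₃) + (b₁c₂ - b₂c₁)(b₃c₄ + b₄c₃)). -/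
/-!
Both forms are diagonal in the basis `e`, so every value reduces to three products of
coordinates. On span(e₁, e₂) the form S is −2/z² times g, so those contributions cancel;
what survives pairs an e₃-coordinate with an e₁- or e₂-coordinate and carries the factor
−(S(e₁,e₁) + S(e₃,e₃)) = 14/z², the sign coming from g(e₃,e₃) = −1.
-/

namespace LinearMap.BilinForm

variable {R M : Type*} [CommSemiring R] [AddCommMonoid M] [Module R M]

theorem apply_of_isOrthogonal_three (B : LinearMap.BilinForm R M) {e : Fin 3 → M}
    (hB : ∀ i j, i ≠ j → B (e i) (e j) = 0) (a b c a' b' c' : R) :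
    B (a • e 0 + b • e 1 + c • e 2) (a' • e 0 + b' • e 1 + c' • e 2) =
      a * a' * B (e 0) (e 0) + b * b' * B (e 1) (e 1) + c * c' * B (e 2) (e 2) := by
  have h01 : B (e 0) (e 1) = 0 := hB 0 1 (by decide)
  have h02 : B (e 0) (e 2) = 0 := hB 0 2 (by decide)
  have h10 : B (e 1) (e 0) = 0 := hB 1 0 (by decide)
  have h12 : B (e 1) (e 2) = 0 := hB 1 2 (by decide)
  have h20 : B (e 2) (e 0) = 0 := hB 2 0 (by decide)
  have h21 : B (e 2) (e 1) = 0 := hB 2 1 (by decide)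
  simp only [map_add, map_smul, LinearMap.add_apply, LinearMap.smul_apply, smul_eq_mul,
    h01, h02, h10, h12, h20, h21]
  ring

end LinearMap.BilinForm

theorem stmt17_general
    (z : ℝ)
    (e : Fin 3 → (Fin 3 → ℝ))
    (g : LinearMap.BilinForm ℝ (Fin 3 → ℝ))
    (hg1 : g (e 0) (e 0) = 1) (hg2 : g (e 1) (e 1) = 1) (hg3 : g (e 2) (e 2) = -1)
    (hg0 : ∀ i j, i ≠ j → g (e i) (e j) = 0)
    (S : LinearMap.BilinForm ℝ (Fin 3 → ℝ))
    (hS1 : S (e 0) (e 0) = -(2 / z ^ 2)) (hS2 : S (e 1) (e 1) = -(2 / z ^ 2))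
    (hS3 : S (e 2) (e 2) = -(12 / z ^ 2))
    (hS0 : ∀ i j, i ≠ j → S (e i) (e j) = 0)
    (a₁ b₁ c₁ a₂ b₂ c₂ a₃ b₃ c₃ a₄ b₄ c₄ : ℝ)
    (X : Fin 3 → ℝ) (hX : X = a₁ • e 0 + b₁ • e 1 + c₁ • e 2)
    (Y : Fin 3 → ℝ) (hY : Y = a₂ • e 0 + b₂ • e 1 + c₂ • e 2)
    (Z : Fin 3 → ℝ) (hZ : Z = a₃ • e 0 + b₃ • e 1 + c₃ • e 2)
    (U : Fin 3 → ℝ) (hU : U = a₄ • e 0 + b₄ • e 1 + c₄ • e 2)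
    : g Y Z * S X U - g X Z * S Y U + g Y U * S X Z - g X U * S Y Z =
        (14 / z ^ 2) *
          ((a₁ * c₂ - a₂ * c₁) * (a₃ * c₄ + a₄ * c₃) +
           (b₁ * c₂ - b₂ * c₁) * (b₃ * c₄ + b₄ * c₃)) := by
  subst hX hY hZ hU
  simp only [LinearMap.BilinForm.apply_of_isOrthogonal_three _ hg0,
    LinearMap.BilinForm.apply_of_isOrthogonal_three _ hS0,
    hg1, hg2, hg3, hS1, hS2, hS3]
  ring

theorem stmt17
    (z : ℝ) (hz : z ≠ 0)
    (e : Fin 3 → (Fin 3 → ℝ)) (he : ∀ i, e i = Pi.single i 1)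
    (g : LinearMap.BilinForm ℝ (Fin 3 → ℝ))
    (hg_symm : ∀ X Y, g X Y = g Y X)
    (hg1 : g (e 0) (e 0) = 1) (hg2 : g (e 1) (e 1) = 1) (hg3 : g (e 2) (e 2) = -1)
    (hg0 : ∀ i j, i ≠ j → g (e i) (e j) = 0)
    (S : LinearMap.BilinForm ℝ (Fin 3 → ℝ))
    (hS_symm : ∀ X Y, S X Y = S Y X)
    (hS1 : S (e 0) (e 0) = -(2 / z ^ 2)) (hS2 : S (e 1) (e 1) = -(2 / z ^ 2))
    (hS3 : S (e 2) (e 2) = -(12 / z ^ 2))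
    (hS0 : ∀ i j, i ≠ j → S (e i) (e j) = 0)
    (a₁ b₁ c₁ a₂ b₂ c₂ a₃ b₃ c₃ a₄ b₄ c₄ : ℝ)
    (X : Fin 3 → ℝ) (hX : X = a₁ • e 0 + b₁ • e 1 + c₁ • e 2)
    (Y : Fin 3 → ℝ) (hY : Y = a₂ • e 0 + b₂ • e 1 + c₂ • e 2)
    (Z : Fin 3 → ℝ) (hZ : Z = a₃ • e 0 + b₃ • e 1 + c₃ • e 2)
    (U : Fin 3 → ℝ) (hU : U = a₄ • e 0 + b₄ • e 1 + c₄ • e 2)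
    : g Y Z * S X U - g X Z * S Y U + g Y U * S X Z - g X U * S Y Z =
        (14 / z ^ 2) *
          ((a₁ * c₂ - a₂ * c₁) * (a₃ * c₄ + a₄ * c₃) +
           (b₁ * c₂ - b₂ * c₁) * (b₃ * c₄ + b₄ * c₃)) :=
  stmt17_general z e g hg1 hg2 hg3 hg0 S hS1 hS2 hS3 hS0 a₁ b₁ c₁ a₂ b₂ c₂ a₃ b₃ c₃ a₄ b₄ c₄ X hX Y
    hY Z hZ U hU
end
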